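/- arXiv:2209.08029 — 3 statements merged into one kernel-verified Lean document; each statement's English description precedes it below -/
import Mathlib

section
/- Let G be a finite simple graph with Cartier–Foata monoid M, and let w be a nonempty word in M. Then the initial alphabet IA(w) = {v : ∃u, w = u·v} is a nonempty independent subset of G. -/
open Classical in
noncomputable def Iav {W : Type*} [Fintype W] (G : SimpleGraph W) (T : Set W) :
    MvPolynomial W ℂ :=
  ∑ S ∈ Finset.univ.filter
      (fun S : Finset W => (∀ x ∈ S, ∀ y ∈ S, ¬ G.Adj x y) ∧ ∀ x ∈ S, x ∉ T),
    (-1 : MvPolynomial W ℂ) ^ S.card * ∏ v ∈ S, MvPolynomial.X v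

def CFRel {V : Type*} (G : SimpleGraph V) : FreeMonoid V → FreeMonoid V → Prop :=
  fun a b => ∃ u v : V, u ≠ v ∧ ¬ G.Adj u v ∧
    a = FreeMonoid.of u * FreeMonoid.of v ∧ b = FreeMonoid.of v * FreeMonoid.of u

def CFCon {V : Type*} (G : SimpleGraph V) : Con (FreeMonoid V) := conGen (CFRel G)

def CF {V : Type*} (G : SimpleGraph V) := (CFCon G).Quotient

instance {V : Type*} (G : SimpleGraph V) : Monoid (CF G) := Con.monoid _

def CFmk {V : Type*} (G : SimpleGraph V) : FreeMonoid V →* CF G := (CFCon G).mk'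

def IA {V : Type*} {G : SimpleGraph V} (w : CF G) : Set V :=
  {v | ∃ u : CF G, w = u * CFmk G (FreeMonoid.of v)}

noncomputable def CFab {V : Type*} (G : SimpleGraph V) :
    CF G →* Multiplicative (Multiset V) :=
  Con.lift _ ((FreeMonoid.lift fun v => Multiplicative.ofAdd ({v} : Multiset V)))
    (by
      refine Con.conGen_le.mpr ?_
      rintro x y ⟨u, v, -, -, rfl, rfl⟩
      refine (Con.ker_rel _).mpr ?_
      simp [mul_comm])

noncomputable def wlen {V : Type*} {G : SimpleGraph V} (w : CF G) : ℕ :=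
  Multiset.card (Multiplicative.toAdd (CFab G w))

noncomputable def occ {V : Type*} [DecidableEq V] {G : SimpleGraph V} (v : V) (w : CF G) : ℕ :=
  Multiset.count v (Multiplicative.toAdd (CFab G w))

/-- The product `Π_{y∈K} y` of the letters of a finite set `K`, multiplied in
increasing order, as an element of the Cartier–Foata monoid. -/
def prodOf {V : Type*} [LinearOrder V] (G : SimpleGraph V) (K : Finset V) : CF G :=
  CFmk G (FreeMonoid.ofList (K.sort (· ≤ ·)))

/-- `S` is an independent set of `G`. -/
def IsIndepSet {W : Type*} (G : SimpleGraph W) (S : Set W) : Prop :=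
  ∀ u ∈ S, ∀ v ∈ S, ¬ G.Adj u v

namespace CF

variable {V : Type*} {G : SimpleGraph V}

theorem mk_surjective : Function.Surjective (CFmk G) := (CFCon G).mk'_surjective

theorem IA_nonempty {w : CF G} (hw : w ≠ 1) : (IA w).Nonempty := by
  obtain ⟨l, rfl⟩ := mk_surjective w
  rcases List.eq_nil_or_concat l.toList with hl | ⟨L, c, hl⟩
  · obtain rfl : l = 1 := FreeMonoid.toList.injective (hl.trans FreeMonoid.toList_one.symm)
    exact absurd (map_one _) hw
  · refine ⟨c, CFmk G (FreeMonoid.ofList L), ?_⟩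
    rw [← map_mul]
    congr 1
    exact FreeMonoid.toList.injective (by simpa using hl)

/-- Erasing all letters outside a clique `s` is compatible with the commutation relations,
since two commuting letters are never both in `s`. -/
noncomputable def cliqueProj {s : Set V} (hs : G.IsClique s) [DecidablePred (· ∈ s)] :
    CF G →* FreeMonoid V :=
  Con.lift _ (FreeMonoid.lift fun v => if v ∈ s then FreeMonoid.of v else 1) <| by
    refine Con.conGen_le.mpr ?_
    rintro _ _ ⟨u, v, huv, hnadj, rfl, rfl⟩
    refine (Con.ker_rel _).mpr ?_
    have : u ∉ s ∨ v ∉ s := by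
      by_contra! h
      exact hnadj (hs h.1 h.2 huv)
    rcases this with hu | hv <;> simp [*]

theorem cliqueProj_of_mem {s : Set V} (hs : G.IsClique s) [DecidablePred (· ∈ s)] {c : V}
    (hc : c ∈ s) : cliqueProj hs (CFmk G (FreeMonoid.of c)) = FreeMonoid.of c :=
  ((CFCon G).lift_mk' _ _).trans (by rw [FreeMonoid.lift_eval_of, if_pos hc])

theorem getLast?_cliqueProj_mul_of_mem {s : Set V} (hs : G.IsClique s) [DecidablePred (· ∈ s)]
    (u : CF G) {c : V} (hc : c ∈ s) :
    (cliqueProj hs (u * CFmk G (FreeMonoid.of c))).toList.getLast? = some c := by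
  simp [cliqueProj_of_mem hs hc]

/-- Two adjacent final letters `x`, `y` would both have to be the last letter of the
projection of `w` onto the clique `{x, y}`. -/
theorem isIndepSet_IA (w : CF G) : IsIndepSet G (IA w) := by
  classical
  rintro x ⟨u, rfl⟩ y ⟨u', hu'⟩ hxy
  have hs : G.IsClique {x, y} := SimpleGraph.isClique_pair.mpr fun _ => hxy
  have hlast := getLast?_cliqueProj_mul_of_mem hs u (Set.mem_insert x _)
  rw [hu', getLast?_cliqueProj_mul_of_mem hs u' (Set.mem_insert_of_mem x rfl)] at hlast
  cases hlast
  exact G.loopless.irrefl _ hxy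

end CF

theorem stmt_6_general {V : Type*} (G : SimpleGraph V) (w : CF G) (hw : w ≠ 1) :
    (IA w).Nonempty ∧ IsIndepSet G (IA w) :=
  ⟨CF.IA_nonempty hw, CF.isIndepSet_IA w⟩

/-- The initial alphabet of a nonempty word in the Cartier–Foata monoid is a
nonempty independent subset of `G`. -/
theorem stmt_6 {V : Type*} [Fintype V] (G : SimpleGraph V) (w : CF G) (hw : w ≠ 1) :
    (IA w).Nonempty ∧ IsIndepSet G (IA w) :=
  stmt_6_general G w hw
end

section
/- Let G be a finite simple graph with Cartier–Foata monoid M, and let K be a nonempty independent subset of V(G). The map w ↦ w / (Π_{y∈K} y) (removing one trailing occurrence of each vertex of K, which is possible since IA(w) = K and K is independent) is a bijection from 𝒫^c_K(G), the nonempty words with initial alphabet exactly K, onto 𝒫^∅_{N_G[K]}(G), the set of words (including the empty word) whose initial alphabet is contained in N_G[K]. -/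
/-!
For a vertex `v`, deleting the letters outside `N_G[v]` and writing `v` as `true` and its
neighbours as `false` is a well-defined homomorphism from `CF G` to the free monoid on `Bool`,
because two commuting letters of `N_G[v]` are both neighbours of `v`; and `v ∈ IA w` exactly when
the image of `w` ends in `true`. Hence, for independent `K`, `IA (u · Π K)` consists of `K` and
the letters of `IA u` outside `N_G[K]`: right multiplication by `Π K` sends words with
`IA ⊆ N_G[K]` to words with `IA = K`, and peeling the letters of `K` off the end shows that every
word with `IA = K` arises. Injectivity is right cancellativity of `CF G`, which holds because
deleting the last occurrence of a letter is well defined on traces.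
-/
def List.eraseLast {α : Type*} [DecidableEq α] (a : α) (l : List α) : List α :=
  (l.reverse.erase a).reverse

lemma List.eraseLast_append {α : Type*} [DecidableEq α] (a : α) (l₁ l₂ : List α) :
    (l₁ ++ l₂).eraseLast a = if a ∈ l₂ then l₁ ++ l₂.eraseLast a else l₁.eraseLast a ++ l₂ := by
  unfold List.eraseLast
  split_ifs with h
  · rw [List.reverse_append, List.erase_append_left _ (List.mem_reverse.mpr h)]
    simp
  · rw [List.reverse_append, List.erase_append_right _ (mt List.mem_reverse.mp h)]
    simp

namespace CF

variable {V : Type*} {G : SimpleGraph V}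

lemma commute_mk_of {x y : V} (hxy : x ≠ y) (hadj : ¬ G.Adj x y) :
    Commute (CFmk G (.of x)) (CFmk G (.of y)) :=
  (Con.eq _).mpr (ConGen.Rel.of _ _ ⟨x, y, hxy, hadj, rfl, rfl⟩)

lemma exists_mk_eq (w : CF G) : ∃ l, CFmk G l = w := Con.mk'_surjective w

variable (G) in
open Classical in
noncomputable def nbhdLetter (v x : V) : FreeMonoid Bool :=
  if x = v then .of true else if G.Adj x v then .of false else 1

lemma nbhdLetter_comm (v : V) {x y : V} (hxy : x ≠ y) (hadj : ¬ G.Adj x y) :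
    nbhdLetter G v x * nbhdLetter G v y = nbhdLetter G v y * nbhdLetter G v x := by
  unfold nbhdLetter
  split_ifs <;> simp_all [G.adj_symm]

variable (G) in
noncomputable def nbhdWord (v : V) : CF G →* FreeMonoid Bool :=
  Con.lift _ (FreeMonoid.lift (nbhdLetter G v)) <| Con.conGen_le.mpr <| by
    rintro _ _ ⟨x, y, hxy, hadj, rfl, rfl⟩
    simpa using nbhdLetter_comm v hxy hadj

lemma nbhdWord_of (v x : V) : nbhdWord G v (CFmk G (.of x)) = nbhdLetter G v x :=
  Con.lift_mk' _ _

lemma commute_of_nbhdWord_eq_one {v : V} {w : CF G} (hw : nbhdWord G v w = 1) :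
    Commute (CFmk G (.of v)) w := by
  obtain ⟨l, rfl⟩ := exists_mk_eq w
  induction l using FreeMonoid.inductionOn with
  | one => exact Commute.one_right _
  | of x =>
    rw [nbhdWord_of, nbhdLetter] at hw
    split_ifs at hw with hxv hadj
    · exact absurd hw (FreeMonoid.of_ne_one _)
    · exact absurd hw (FreeMonoid.of_ne_one _)
    · exact commute_mk_of (Ne.symm hxv) (fun h => hadj (G.adj_symm h))
  | mul x y ihx ihy =>
    rw [map_mul, map_mul, mul_eq_one'] at hw
    rw [map_mul]
    exact (ihx hw.1).mul_right (ihy hw.2)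

lemma mem_IA_iff_getLast?_nbhdWord {v : V} {w : CF G} :
    v ∈ IA w ↔ (nbhdWord G v w).toList.getLast? = some true := by
  constructor
  · rintro ⟨u, rfl⟩
    simp [nbhdWord_of, nbhdLetter]
  · obtain ⟨l, rfl⟩ := exists_mk_eq w
    induction l using FreeMonoid.inductionOn with
    | one => simp
    | of x =>
      intro h
      rw [nbhdWord_of, nbhdLetter] at h
      split_ifs at h with hxv
      · exact ⟨1, by rw [one_mul, hxv]⟩
      all_goals simp at h
    | mul x y ihx ihy =>
      intro h
      rw [map_mul, map_mul, FreeMonoid.toList_mul, List.getLast?_append] at h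
      cases hy : (nbhdWord G v (CFmk G y)).toList.getLast? with
      | none =>
        rw [hy, Option.none_or] at h
        obtain ⟨u, hu⟩ := ihx h
        have hy1 : nbhdWord G v (CFmk G y) = 1 :=
          FreeMonoid.toList.injective (List.getLast?_eq_none_iff.mp hy)
        refine ⟨u * CFmk G y, ?_⟩
        rw [map_mul, hu, mul_assoc, mul_assoc, (commute_of_nbhdWord_eq_one hy1).eq]
      | some b =>
        rw [hy, Option.some_or] at h
        obtain ⟨u, hu⟩ := ihy (hy.trans h)
        exact ⟨CFmk G x * u, by rw [map_mul, hu, mul_assoc]⟩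

lemma mem_IA_mul_of_iff {v x : V} {u : CF G} :
    v ∈ IA (u * CFmk G (.of x)) ↔ v = x ∨ (v ∈ IA u ∧ v ≠ x ∧ ¬ G.Adj x v) := by
  rw [mem_IA_iff_getLast?_nbhdWord, mem_IA_iff_getLast?_nbhdWord, map_mul, nbhdWord_of,
    FreeMonoid.toList_mul, List.getLast?_append, nbhdLetter]
  split_ifs with hxv hadj
  · simp [hxv]
  · simp [hadj, Ne.symm (G.ne_of_adj hadj)]
  · simp [hadj, Ne.symm hxv]

lemma notMem_IA_one (v : V) : v ∉ IA (1 : CF G) := by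
  simp [mem_IA_iff_getLast?_nbhdWord]

lemma mem_iff_and_mk_eraseLast_eq_of_cfCon [DecidableEq V] (v : V) {a b : FreeMonoid V} (h : CFCon G a b) :
    (v ∈ a.toList ↔ v ∈ b.toList) ∧
      CFmk G (.ofList (a.toList.eraseLast v)) = CFmk G (.ofList (b.toList.eraseLast v)) := by
  change ConGen.Rel (CFRel G) a b at h
  induction h with
  | of _ _ h =>
    obtain ⟨x, y, hxy, hadj, rfl, rfl⟩ := h
    refine ⟨by simp [or_comm], ?_⟩
    simp only [FreeMonoid.toList_mul, FreeMonoid.toList_of, List.eraseLast]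
    by_cases hy : v = y
    · subst hy
      simp [hxy]
    by_cases hx : v = x
    · subst hx
      simp [Ne.symm hxy]
    · simpa [Ne.symm hx, Ne.symm hy] using (commute_mk_of hxy hadj).eq
  | refl => exact ⟨Iff.rfl, rfl⟩
  | symm _ ih => exact ⟨ih.1.symm, ih.2.symm⟩
  | trans _ _ ih₁ ih₂ => exact ⟨ih₁.1.trans ih₂.1, ih₁.2.trans ih₂.2⟩
  | mul h₁ h₂ ih₁ ih₂ =>
    refine ⟨by simp [ih₁.1, ih₂.1], ?_⟩
    simp only [FreeMonoid.toList_mul, List.eraseLast_append, ← ih₂.1]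
    split_ifs
    · rw [FreeMonoid.ofList_append, FreeMonoid.ofList_append, map_mul, map_mul, ih₂.2]
      exact congrArg (· * _) ((Con.eq _).mpr h₁)
    · rw [FreeMonoid.ofList_append, FreeMonoid.ofList_append, map_mul, map_mul, ih₁.2]
      exact congrArg (_ * ·) ((Con.eq _).mpr h₂)

lemma mul_of_right_cancel {v : V} {u u' : CF G}
    (h : u * CFmk G (.of v) = u' * CFmk G (.of v)) : u = u' := by
  classical
  obtain ⟨l, rfl⟩ := exists_mk_eq u
  obtain ⟨l', rfl⟩ := exists_mk_eq u'
  rw [← map_mul, ← map_mul] at h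
  simpa [List.eraseLast] using (mem_iff_and_mk_eraseLast_eq_of_cfCon v ((Con.eq _).mp h)).2

instance : IsRightCancelMul (CF G) where
  mul_right_cancel w := by
    obtain ⟨l, rfl⟩ := exists_mk_eq w
    induction l using FreeMonoid.inductionOn with
    | one => simpa using isRegular_one.right
    | of v => exact fun u u' => mul_of_right_cancel
    | mul x y ihx ihy =>
      intro u u' h
      simp only [map_mul, ← mul_assoc] at h
      exact ihx (ihy h)

lemma mem_IA_mul_ofList_iff {l : List V} (hl : l.Pairwise fun a b => a ≠ b ∧ ¬ G.Adj a b)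
    {v : V} {u : CF G} :
    v ∈ IA (u * CFmk G (.ofList l)) ↔ v ∈ l ∨ (v ∈ IA u ∧ v ∉ l ∧ ∀ y ∈ l, ¬ G.Adj y v) := by
  induction l generalizing u with
  | nil => simp
  | cons x l ih =>
    rw [List.pairwise_cons] at hl
    rw [FreeMonoid.ofList_cons, map_mul, ← mul_assoc, ih hl.2, mem_IA_mul_of_iff]
    have hxl : x ∉ l := fun h => (hl.1 x h).1 rfl
    have hxadj : ∀ y ∈ l, ¬ G.Adj y x := fun y hy h => (hl.1 y hy).2 h.symm
    by_cases hvx : v = x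
    · subst hvx
      simpa [hxl] using hxadj
    · simp only [List.mem_cons, or_imp, forall_and, forall_eq, hvx, ne_eq, not_false_eq_true,
        true_and, false_or]
      tauto

lemma exists_eq_mul_ofList {l : List V} (hl : l.Pairwise fun a b => a ≠ b ∧ ¬ G.Adj a b)
    {w : CF G} (h : ∀ y ∈ l, y ∈ IA w) : ∃ u, w = u * CFmk G (.ofList l) := by
  induction l generalizing w with
  | nil => exact ⟨w, by simp⟩
  | cons x l ih =>
    rw [List.pairwise_cons] at hl
    obtain ⟨u₁, rfl⟩ := ih hl.2 fun y hy => h y (List.mem_cons_of_mem _ hy)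
    have hx : x ∉ l := fun hx => (hl.1 x hx).1 rfl
    have hxu : x ∈ IA u₁ := by
      have := h x List.mem_cons_self
      rw [mem_IA_mul_ofList_iff hl.2] at this
      exact (this.resolve_left hx).1
    obtain ⟨u, rfl⟩ := hxu
    exact ⟨u, by rw [FreeMonoid.ofList_cons, map_mul, mul_assoc]⟩

section prodOf

variable [LinearOrder V] {K : Finset V}

lemma pairwise_sort_of_isIndepSet (hK : IsIndepSet G ↑K) :
    (K.sort (· ≤ ·)).Pairwise fun a b => a ≠ b ∧ ¬ G.Adj a b :=
  (K.sort_nodup _).pairwise_of_forall_ne fun a ha b hb hab =>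
    ⟨hab, hK a (by simpa using ha) b (by simpa using hb)⟩

lemma mem_IA_mul_prodOf_iff (hK : IsIndepSet G ↑K) {v : V} {u : CF G} :
    v ∈ IA (u * prodOf G K) ↔ v ∈ K ∨ (v ∈ IA u ∧ v ∉ K ∧ ∀ y ∈ K, ¬ G.Adj y v) := by
  simpa [prodOf] using mem_IA_mul_ofList_iff (pairwise_sort_of_isIndepSet hK)

lemma IA_mul_prodOf_eq_iff (hK : IsIndepSet G ↑K) {u : CF G} :
    IA (u * prodOf G K) = ↑K ↔ IA u ⊆ ↑K ∪ {z | ∃ y ∈ K, G.Adj y z} := by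
  simp only [Set.ext_iff, mem_IA_mul_prodOf_iff hK, Set.subset_def, Set.mem_union,
    Finset.mem_coe]
  grind

lemma mul_prodOf_ne_one (hne : K.Nonempty) (hK : IsIndepSet G ↑K) (u : CF G) :
    u * prodOf G K ≠ 1 := by
  obtain ⟨y, hy⟩ := hne
  intro h
  exact notMem_IA_one y (h ▸ (mem_IA_mul_prodOf_iff hK).2 (Or.inl hy))

lemma exists_eq_mul_prodOf (hK : IsIndepSet G ↑K) {w : CF G} (hw : IA w = ↑K) :
    ∃ u, w = u * prodOf G K :=
  exists_eq_mul_ofList (pairwise_sort_of_isIndepSet hK) fun y hy => by simpa [hw] using hy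

end prodOf

end CF

theorem stmt_7_general {V : Type*} [LinearOrder V] (G : SimpleGraph V)
    (K : Finset V) (hK : K.Nonempty) (hind : IsIndepSet G ↑K) :
    ∃ φ : {w : CF G // w ≠ 1 ∧ IA w = ↑K} ≃
        {w : CF G // IA w ⊆ ↑K ∪ {z | ∃ y ∈ K, G.Adj y z}},
      ∀ w : {w : CF G // w ≠ 1 ∧ IA w = ↑K}, w.1 = (φ w).1 * prodOf G K := by
  let ψ : {w : CF G // IA w ⊆ ↑K ∪ {z | ∃ y ∈ K, G.Adj y z}} →
      {w : CF G // w ≠ 1 ∧ IA w = ↑K} := fun u =>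
    ⟨u.1 * prodOf G K, CF.mul_prodOf_ne_one hK hind u.1, (CF.IA_mul_prodOf_eq_iff hind).2 u.2⟩
  have hψ : Function.Bijective ψ := by
    refine ⟨fun u u' h => Subtype.ext (mul_right_cancel (congrArg Subtype.val h)), fun w => ?_⟩
    obtain ⟨u, hu⟩ := CF.exists_eq_mul_prodOf hind w.2.2
    exact ⟨⟨u, (CF.IA_mul_prodOf_eq_iff hind).1 (hu ▸ w.2.2)⟩, Subtype.ext hu.symm⟩
  refine ⟨(Equiv.ofBijective ψ hψ).symm, fun w => ?_⟩
  exact congrArg Subtype.val ((Equiv.ofBijective ψ hψ).apply_symm_apply w).symm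

/-- For a nonempty independent subset `K` of `V(G)`, division by `Π_{y∈K} y` is
a bijection from `𝒫^c_K(G)` onto `𝒫^∅_{N_G[K]}(G)`: there is a bijection `φ`
such that `w = φ(w) · Π_{y∈K} y` for every `w` with `IA(w) = K`. -/
theorem stmt_7 {V : Type*} [Fintype V] [LinearOrder V] (G : SimpleGraph V)
    (K : Finset V) (hK : K.Nonempty) (hind : IsIndepSet G ↑K) :
    ∃ φ : {w : CF G // w ≠ 1 ∧ IA w = ↑K} ≃
        {w : CF G // IA w ⊆ ↑K ∪ {z | ∃ y ∈ K, G.Adj y z}},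
      ∀ w : {w : CF G // w ≠ 1 ∧ IA w = ↑K}, w.1 = (φ w).1 * prodOf G K :=
  stmt_7_general G K hK hind
end

section
/- Let G be a finite simple graph with Cartier–Foata monoid M, let u ∈ V(G), and let w ∈ M be a nonempty word with IA(w) = {u} and in which u occurs exactly once. Write N_G(u, w) = {u₁ < ⋯ < u_d} for the set of neighbors of u that occur in w (in a fixed total order on V(G)). Then there exist unique words w₁, …, w_d ∈ M (possibly empty) such that: (i) w = w₁ ⋯ w_d · u; (ii) if w_i is nonempty then IA(w_i) = {u_i}; and (iii) for all i < j, the vertex u_i does not occur in w_j. -/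
section Presentation

variable {V : Type*} {G : SimpleGraph V}

def SwapStep (G : SimpleGraph V) (l l' : List V) : Prop :=
  ∃ (c₁ c₂ : List V) (a b : V), Gᶜ.Adj a b ∧ l = c₁ ++ a :: b :: c₂ ∧ l' = c₁ ++ b :: a :: c₂

abbrev SwapEquiv (G : SimpleGraph V) : List V → List V → Prop :=
  Relation.ReflTransGen (SwapStep G)

lemma SwapStep.symm {l l' : List V} (h : SwapStep G l l') : SwapStep G l' l := by
  obtain ⟨c₁, c₂, a, b, hab, rfl, rfl⟩ := h
  exact ⟨c₁, c₂, b, a, hab.symm, rfl, rfl⟩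

lemma SwapStep.append_left {l l' : List V} (c : List V) (h : SwapStep G l l') :
    SwapStep G (c ++ l) (c ++ l') := by
  obtain ⟨c₁, c₂, a, b, hab, rfl, rfl⟩ := h
  exact ⟨c ++ c₁, c₂, a, b, hab, by simp, by simp⟩

lemma SwapStep.append_right {l l' : List V} (c : List V) (h : SwapStep G l l') :
    SwapStep G (l ++ c) (l' ++ c) := by
  obtain ⟨c₁, c₂, a, b, hab, rfl, rfl⟩ := h
  exact ⟨c₁, c₂ ++ c, a, b, hab, by simp, by simp⟩

lemma SwapStep.reverse {l l' : List V} (h : SwapStep G l l') :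
    SwapStep G l.reverse l'.reverse := by
  obtain ⟨c₁, c₂, a, b, hab, rfl, rfl⟩ := h
  exact ⟨c₂.reverse, c₁.reverse, b, a, hab.symm, by simp, by simp⟩

lemma SwapEquiv.symm {l l' : List V} (h : SwapEquiv G l l') : SwapEquiv G l' l := by
  induction h with
  | refl => exact .refl
  | tail _ hstep ih => exact ih.head hstep.symm

lemma SwapEquiv.append {l₁ l₁' l₂ l₂' : List V} (h₁ : SwapEquiv G l₁ l₁')
    (h₂ : SwapEquiv G l₂ l₂') : SwapEquiv G (l₁ ++ l₂) (l₁' ++ l₂') :=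
  (h₁.lift (· ++ l₂) fun _ _ h => h.append_right l₂).trans
    (h₂.lift (l₁' ++ ·) fun _ _ h => h.append_left l₁')

lemma SwapEquiv.reverse {l l' : List V} (h : SwapEquiv G l l') :
    SwapEquiv G l.reverse l'.reverse :=
  h.lift _ fun _ _ h => h.reverse

def swapCon (G : SimpleGraph V) : Con (FreeMonoid V) where
  r a b := SwapEquiv G a.toList b.toList
  iseqv := ⟨fun _ => .refl, SwapEquiv.symm, .trans⟩
  mul' h₁ h₂ := by simpa using h₁.append h₂

lemma swapEquiv_of_CFmk_eq {l m : List V}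
    (h : CFmk G (.ofList l) = CFmk G (.ofList m)) : SwapEquiv G l m := by
  have hle : CFCon G ≤ swapCon G := Con.conGen_le.mpr <| by
    rintro _ _ ⟨a, b, hne, hadj, rfl, rfl⟩
    exact .single ⟨[], [], a, b, (G.compl_adj a b).mpr ⟨hne, hadj⟩, rfl, rfl⟩
  exact hle ((Con.eq _).mp h)

lemma CFmk_of_mul_of_comm {a b : V} (h : Gᶜ.Adj a b) :
    CFmk G (.of a) * CFmk G (.of b) = CFmk G (.of b) * CFmk G (.of a) := by
  rw [← map_mul, ← map_mul]
  exact (Con.eq _).mpr (ConGen.Rel.of _ _ ⟨a, b, h.ne, ((G.compl_adj a b).mp h).2, rfl, rfl⟩)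

lemma CFmk_of_mul_ofList_comm {v : V} {l : List V} (h : ∀ x ∈ l, Gᶜ.Adj v x) :
    CFmk G (.of v) * CFmk G (.ofList l) = CFmk G (.ofList l) * CFmk G (.of v) := by
  induction l with
  | nil => simp
  | cons x l ih =>
    simp only [List.forall_mem_cons] at h
    rw [FreeMonoid.ofList_cons, map_mul, ← mul_assoc, CFmk_of_mul_of_comm h.1, mul_assoc,
      ih h.2, mul_assoc]

lemma exists_CFmk_ofList (w : CF G) : ∃ l : List V, w = CFmk G (.ofList l) := by
  obtain ⟨x, rfl⟩ := Con.mk'_surjective (c := CFCon G) w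
  exact ⟨x.toList, rfl⟩

end Presentation

section Counting

variable {V : Type*} {G : SimpleGraph V}

lemma wlen_mul (a b : CF G) : wlen (a * b) = wlen a + wlen b := by
  simp [wlen]

lemma wlen_of (v : V) : wlen (CFmk G (.of v)) = 1 := rfl

variable [DecidableEq V]

lemma occ_one (v : V) : occ v (1 : CF G) = 0 := by
  simp [occ]

lemma occ_mul (v : V) (a b : CF G) : occ v (a * b) = occ v a + occ v b := by
  simp [occ]

lemma occ_mul_eq_zero_iff {v : V} {a b : CF G} :
    occ v (a * b) = 0 ↔ occ v a = 0 ∧ occ v b = 0 := by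
  simp [occ_mul]

lemma occ_of (v x : V) : occ v (CFmk G (.of x)) = if v = x then 1 else 0 :=
  Multiset.count_singleton v x

lemma occ_of_self (v : V) : occ v (CFmk G (.of v)) = 1 := by
  simp [occ_of]

lemma occ_list_prod_eq_zero_iff {v : V} {ws : List (CF G)} :
    occ v ws.prod = 0 ↔ ∀ w ∈ ws, occ v w = 0 := by
  induction ws with
  | nil => simp [occ_one]
  | cons w ws ih => simp [occ_mul, ih]

end Counting

section PullFront

variable {V : Type*} {G : SimpleGraph V}

open Classical in
-- Deletes the first `v`, provided it can be moved to the front past commuting letters.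
noncomputable def pullFront (G : SimpleGraph V) (v : V) : List V → Option (List V)
  | [] => none
  | x :: xs => if x = v then some xs else
      if Gᶜ.Adj v x then (pullFront G v xs).map (x :: ·) else none

-- `pullFront` acts at the left end of a list; reading lists reversed lets it act at the right.
def revMk (G : SimpleGraph V) (l : List V) : CF G := CFmk G (.ofList l.reverse)

lemma revMk_cons (x : V) (l : List V) :
    revMk G (x :: l) = revMk G l * CFmk G (.of x) := by
  simp [revMk]

lemma SwapStep.revMk_eq {l l' : List V} (h : SwapStep G l l') : revMk G l = revMk G l' := by
  obtain ⟨c₁, c₂, a, b, hab, rfl, rfl⟩ := h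
  simp only [revMk, List.reverse_append, List.reverse_cons, List.append_assoc,
    FreeMonoid.ofList_append, FreeMonoid.ofList_singleton, map_mul]
  rw [← mul_assoc (CFmk G (.of b)), CFmk_of_mul_of_comm hab.symm, mul_assoc]

lemma pullFront_eq_some {v : V} {l t : List V} (h : pullFront G v l = some t) :
    ∃ l₁ l₂, l = l₁ ++ v :: l₂ ∧ t = l₁ ++ l₂ ∧ ∀ x ∈ l₁, Gᶜ.Adj v x := by
  induction l generalizing t with
  | nil => simp [pullFront] at h
  | cons x xs ih =>
    unfold pullFront at h
    split_ifs at h with hxv hvx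
    · subst hxv
      exact ⟨[], xs, rfl, (Option.some_inj.mp h).symm, by simp⟩
    · obtain ⟨t', ht', rfl⟩ := Option.map_eq_some_iff.mp h
      obtain ⟨l₁, l₂, rfl, rfl, hl₁⟩ := ih ht'
      exact ⟨x :: l₁, l₂, rfl, rfl, List.forall_mem_cons.mpr ⟨hvx, hl₁⟩⟩

lemma SwapStep.pullFront_map_revMk {v : V} {l l' : List V} (h : SwapStep G l l') :
    (pullFront G v l).map (revMk G) = (pullFront G v l').map (revMk G) := by
  obtain ⟨c₁, c₂, a, b, hab, rfl, rfl⟩ := h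
  induction c₁ with
  | cons x xs ih =>
    simp only [List.cons_append, pullFront]
    split_ifs
    · simpa using SwapStep.revMk_eq ⟨xs, c₂, a, b, hab, rfl, rfl⟩
    · simpa [Option.map_map, Function.comp_def, revMk_cons] using
        congrArg (Option.map (· * CFmk G (.of x))) ih
    · rfl
  | nil =>
    simp only [List.nil_append, pullFront]
    by_cases hav : a = v <;> by_cases hbv : b = v
    · exact absurd (hav.trans hbv.symm) hab.ne
    · subst hav
      simp [hbv, hab]
    · subst hbv
      simp [hav, hab.symm]
    · simp only [hav, hbv, if_false]
      split_ifs <;> simp [Option.map_map, Function.comp_def, revMk_cons, mul_assoc,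
        CFmk_of_mul_of_comm hab]

lemma SwapEquiv.pullFront_map_revMk {v : V} {l l' : List V} (h : SwapEquiv G l l') :
    (pullFront G v l).map (revMk G) = (pullFront G v l').map (revMk G) := by
  induction h with
  | refl => rfl
  | tail _ hstep ih => exact ih.trans hstep.pullFront_map_revMk

lemma exists_eq_append_cons_of_CFmk_eq_mul_of {v : V} {l m : List V}
    (h : CFmk G (.ofList l) = CFmk G (.ofList m) * CFmk G (.of v)) :
    ∃ l₁ l₂, l = l₁ ++ v :: l₂ ∧ (∀ x ∈ l₂, Gᶜ.Adj v x) ∧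
      CFmk G (.ofList (l₁ ++ l₂)) = CFmk G (.ofList m) := by
  rw [← FreeMonoid.ofList_singleton, ← map_mul, ← FreeMonoid.ofList_append] at h
  have hswap : SwapEquiv G l.reverse (v :: m.reverse) := by
    simpa using (swapEquiv_of_CFmk_eq h).reverse
  have hpull := hswap.pullFront_map_revMk (v := v)
  simp only [pullFront, if_pos, Option.map_some] at hpull
  obtain ⟨t, ht, hrev⟩ := Option.map_eq_some_iff.mp hpull
  obtain ⟨s₁, s₂, hl, rfl, hs₁⟩ := pullFront_eq_some ht
  refine ⟨s₂.reverse, s₁.reverse, by simpa using congrArg List.reverse hl, by simpa using hs₁, ?_⟩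
  simpa [revMk] using hrev

end PullFront

section InitialAlphabet

variable {V : Type*} {G : SimpleGraph V}

lemma mem_IA_CFmk_ofList_iff {v : V} {l : List V} :
    v ∈ IA (CFmk G (.ofList l)) ↔ ∃ l₁ l₂, l = l₁ ++ v :: l₂ ∧ ∀ x ∈ l₂, Gᶜ.Adj v x := by
  constructor
  · rintro ⟨w, hw⟩
    obtain ⟨m, rfl⟩ := exists_CFmk_ofList w
    obtain ⟨l₁, l₂, hl, hl₂, -⟩ := exists_eq_append_cons_of_CFmk_eq_mul_of hw
    exact ⟨l₁, l₂, hl, hl₂⟩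
  · rintro ⟨l₁, l₂, rfl, hl₂⟩
    refine ⟨CFmk G (.ofList (l₁ ++ l₂)), ?_⟩
    simp only [FreeMonoid.ofList_append, FreeMonoid.ofList_cons, map_mul, mul_assoc,
      CFmk_of_mul_ofList_comm hl₂]

lemma mul_of_left_inj {v : V} {a b : CF G} :
    a * CFmk G (.of v) = b * CFmk G (.of v) ↔ a = b := by
  refine ⟨fun h => ?_, fun h => h ▸ rfl⟩
  obtain ⟨la, rfl⟩ := exists_CFmk_ofList a
  obtain ⟨lb, rfl⟩ := exists_CFmk_ofList b
  rw [← FreeMonoid.ofList_singleton, ← map_mul, ← FreeMonoid.ofList_append,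
    FreeMonoid.ofList_singleton] at h
  obtain ⟨l₁, l₂, hl, hl₂, hlb⟩ := exists_eq_append_cons_of_CFmk_eq_mul_of h
  rcases List.eq_nil_or_concat l₂ with rfl | ⟨l₂, y, rfl⟩
  · rwa [← List.append_cancel_right hl, List.append_nil] at hlb
  · -- `v` would be the last letter of `l₂`, but `v` does not commute with itself
    have hl' : la ++ [v] = (l₁ ++ v :: l₂) ++ [y] := by simp [hl]
    have hvy : v = y := List.singleton_inj.mp (List.append_inj' hl' rfl).2
    exact absurd (hl₂ y (by simp)) (hvy ▸ Gᶜ.loopless.irrefl v)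

lemma IA_subset_IA_mul (a b : CF G) : IA b ⊆ IA (a * b) := by
  rintro v ⟨b', rfl⟩
  exact ⟨a * b', (mul_assoc _ _ _).symm⟩

lemma IA_mul_subset (a b : CF G) : IA (a * b) ⊆ IA a ∪ IA b := by
  intro v hv
  obtain ⟨la, rfl⟩ := exists_CFmk_ofList a
  obtain ⟨lb, rfl⟩ := exists_CFmk_ofList b
  rw [← map_mul, ← FreeMonoid.ofList_append, mem_IA_CFmk_ofList_iff] at hv
  obtain ⟨l₁, l₂, hl, hl₂⟩ := hv
  rcases List.append_eq_append_iff.mp hl with ⟨c, -, rfl⟩ | ⟨_ | ⟨y, c⟩, rfl, hc⟩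
  · exact .inr (mem_IA_CFmk_ofList_iff.mpr ⟨c, l₂, rfl, hl₂⟩)
  · exact .inr (mem_IA_CFmk_ofList_iff.mpr ⟨[], l₂, by simpa using hc.symm, hl₂⟩)
  · obtain ⟨rfl, rfl⟩ := List.cons_eq_cons.mp hc
    exact .inl (mem_IA_CFmk_ofList_iff.mpr
      ⟨l₁, c, rfl, fun x hx => hl₂ x (List.mem_append_left _ hx)⟩)

lemma mem_IA_mul_of {v x : V} {a : CF G} (hv : v ∈ IA a) (hvx : Gᶜ.Adj v x) :
    v ∈ IA (a * CFmk G (.of x)) := by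
  obtain ⟨a', rfl⟩ := hv
  exact ⟨a' * CFmk G (.of x), by rw [mul_assoc, CFmk_of_mul_of_comm hvx, mul_assoc]⟩

lemma IA_nonempty {w : CF G} (hw : w ≠ 1) : (IA w).Nonempty := by
  obtain ⟨l, rfl⟩ := exists_CFmk_ofList w
  rcases List.eq_nil_or_concat l with rfl | ⟨l, v, rfl⟩
  · exact absurd rfl hw
  · exact ⟨v, mem_IA_CFmk_ofList_iff.mpr ⟨l, [], by simp, by simp⟩⟩

variable [DecidableEq V]

lemma occ_pos_of_mem_IA {v : V} {w : CF G} (hv : v ∈ IA w) : 0 < occ v w := by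
  obtain ⟨w', rfl⟩ := hv
  simp [occ_mul, occ_of_self]

lemma IA_subset_singleton_iff {z : V} {s : CF G} : IA s ⊆ {z} ↔ (s ≠ 1 → IA s = {z}) := by
  refine ⟨fun h hs => (Set.Nonempty.subset_singleton_iff (IA_nonempty hs)).mp h, fun h => ?_⟩
  rcases eq_or_ne s 1 with rfl | hs
  · intro v hv
    simpa [occ_one] using occ_pos_of_mem_IA hv
  · exact (h hs).subset

end InitialAlphabet

section Factorization

variable {V : Type*} {G : SimpleGraph V}

lemma exists_mul_eq_of_wlen_maximal (P : CF G → Prop) (hP : P 1) (w : CF G) :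
    ∃ s r, w = s * r ∧ P r ∧ ∀ s' r', w = s' * r' → P r' → wlen r' ≤ wlen r := by
  classical
  let Q : ℕ → Prop := fun n => ∃ s r, w = s * r ∧ P r ∧ wlen r = n
  have hQ : ∀ {n}, Q n → n ≤ wlen w := by
    rintro _ ⟨s, r, rfl, -, rfl⟩
    simp [wlen_mul]
  obtain ⟨s, r, hw, hr, hlen⟩ : Q (Nat.findGreatest Q (wlen w)) :=
    Nat.findGreatest_spec (Nat.zero_le _) ⟨w, 1, (mul_one w).symm, hP, rfl⟩
  refine ⟨s, r, hw, hr, fun s' r' hw' hr' => ?_⟩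
  rw [hlen]
  exact Nat.le_findGreatest (hQ ⟨s', r', hw', hr', rfl⟩) ⟨s', r', hw', hr', rfl⟩

variable [DecidableEq V]

lemma exists_mul_eq_IA_subset_singleton (z : V) (w : CF G) :
    ∃ s r, w = s * r ∧ IA s ⊆ {z} ∧ occ z r = 0 := by
  obtain ⟨s, r, rfl, hr, hmax⟩ := exists_mul_eq_of_wlen_maximal (occ z · = 0) (occ_one z) w
  refine ⟨s, r, rfl, fun x ⟨s', hs'⟩ => ?_, hr⟩
  by_contra hxz
  have hle := hmax s' (CFmk G (.of x) * r) (by rw [hs', mul_assoc])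
    (by simp [occ_mul, occ_of, Ne.symm hxz, hr])
  simp [wlen_mul, wlen_of] at hle

lemma eq_of_mul_eq_mul_of_IA_subset {A : Set V} {s r s' r' : CF G} (h : s * r = s' * r')
    (hs : IA s ⊆ A) (hs' : IA s' ⊆ A) (hr : ∀ x ∈ A, occ x r = 0)
    (hr' : ∀ x ∈ A, occ x r' = 0) : s = s' ∧ r = r' := by
  obtain ⟨l, rfl⟩ := exists_CFmk_ofList r'
  induction l using List.reverseRecOn generalizing r with
  | nil =>
    rw [FreeMonoid.ofList_nil, map_one, mul_one] at h
    obtain rfl : r = 1 := by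
      by_contra hr1
      obtain ⟨x, hx⟩ := IA_nonempty hr1
      have hxA : x ∈ A := hs' (h ▸ IA_subset_IA_mul s r hx)
      exact (occ_pos_of_mem_IA hx).ne' (hr x hxA)
    simpa using h
  | append_singleton l x ih =>
    rw [FreeMonoid.ofList_append, FreeMonoid.ofList_singleton, map_mul] at h hr' ⊢
    have hx : x ∈ IA (s * r) := ⟨s' * CFmk G (.ofList l), by rw [h, mul_assoc]⟩
    rcases IA_mul_subset s r hx with hxs | ⟨r₀, rfl⟩
    · have := hr' x (hs hxs)
      simp [occ_mul, occ_of_self] at this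
    · rw [← mul_assoc, ← mul_assoc, mul_of_left_inj] at h
      obtain ⟨rfl, rfl⟩ := ih (fun y hy => (occ_mul_eq_zero_iff.mp (hr y hy)).1) h
        (fun y hy => (occ_mul_eq_zero_iff.mp (hr' y hy)).1)
      exact ⟨rfl, rfl⟩

end Factorization

section ListZip

lemma List.forall_mem_zip_snd_iff {α β : Type*} {l : List α} {l' : List β} {P : β → Prop}
    (h : l'.length ≤ l.length) : (∀ p ∈ l.zip l', P p.2) ↔ ∀ b ∈ l', P b := by
  rw [← List.forall_mem_map (f := Prod.snd), List.map_snd_zip h]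

lemma List.pairwise_zip_iff_get {α β : Type*} {l : List α} {l' : List β} {R : α → β → Prop}
    (h : l'.length = l.length) :
    (l.zip l').Pairwise (fun p q => R p.1 q.2) ↔
      ∀ (i j : ℕ) (hi : i < l.length) (hj : j < l'.length), i < j →
        R (l.get ⟨i, hi⟩) (l'.get ⟨j, hj⟩) := by
  simp only [List.pairwise_iff_getElem, List.length_zip, List.getElem_zip, List.get_eq_getElem,
    h, min_self]

end ListZip

section BlockDecomposition

variable {V : Type*} {G : SimpleGraph V} [DecidableEq V]

def IsBlockDecomposition (L : List V) (w : CF G) (ws : List (CF G)) : Prop :=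
  ws.length = L.length ∧ ws.prod = w ∧ (∀ p ∈ L.zip ws, p.2 ≠ 1 → IA p.2 = {p.1}) ∧
    (L.zip ws).Pairwise fun p q => occ p.1 q.2 = 0

lemma isBlockDecomposition_cons {z : V} {L : List V} {w s : CF G} {ws : List (CF G)} :
    IsBlockDecomposition (z :: L) w (s :: ws) ↔
      w = s * ws.prod ∧ IA s ⊆ {z} ∧ occ z ws.prod = 0 ∧
        IsBlockDecomposition L ws.prod ws := by
  simp only [IsBlockDecomposition, List.length_cons, add_left_inj, List.prod_cons,
    List.zip_cons_cons, List.forall_mem_cons, List.pairwise_cons, IA_subset_singleton_iff,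
    occ_list_prod_eq_zero_iff]
  constructor
  · rintro ⟨hlen, rfl, ⟨hs, hws⟩, hz, hpw⟩
    exact ⟨rfl, hs, (List.forall_mem_zip_snd_iff hlen.le).mp hz, hlen, trivial, hws, hpw⟩
  · rintro ⟨rfl, hs, hz, hlen, -, hws, hpw⟩
    exact ⟨hlen, rfl, ⟨hs, hws⟩, (List.forall_mem_zip_snd_iff hlen.le).mpr hz, hpw⟩

theorem existsUnique_isBlockDecomposition (L : List V) (w : CF G) (hw : IA w ⊆ {x | x ∈ L}) :
    ∃! ws, IsBlockDecomposition L w ws := by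
  induction L generalizing w with
  | nil =>
    obtain rfl : w = 1 := by
      by_contra hw1
      obtain ⟨v, hv⟩ := IA_nonempty hw1
      exact List.not_mem_nil (hw hv)
    refine ⟨[], by simp [IsBlockDecomposition], fun ws hws => ?_⟩
    simpa using hws.1
  | cons z L ih =>
    obtain ⟨s, r, rfl, hs, hr⟩ := exists_mul_eq_IA_subset_singleton z w
    have hrL : IA r ⊆ {x | x ∈ L} := fun x hx => by
      have hxz : x ≠ z := by
        rintro rfl
        exact (occ_pos_of_mem_IA hx).ne' hr
      simpa [hxz] using hw (IA_subset_IA_mul s r hx)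
    obtain ⟨ws, hws, huniq⟩ := ih r hrL
    have hprod : ws.prod = r := hws.2.1
    refine ⟨s :: ws, isBlockDecomposition_cons.mpr ⟨by rw [hprod], hs, hprod ▸ hr, hprod ▸ hws⟩,
      ?_⟩
    rintro (_ | ⟨s₂, ws₂⟩) h₂
    · exact absurd h₂.1 (by simp)
    obtain ⟨heq, hs₂, hr₂, hws₂⟩ := isBlockDecomposition_cons.mp h₂
    obtain ⟨rfl, hr₂r⟩ := eq_of_mul_eq_mul_of_IA_subset heq.symm hs₂ hs
      (fun x hx => hx ▸ hr₂) (fun x hx => hx ▸ hr)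
    rw [huniq ws₂ (hr₂r ▸ hws₂)]

lemma adj_of_mem_IA_of_IA_mul_eq {u x : V} {w : CF G} (hIA : IA (w * CFmk G (.of u)) = {u})
    (hu : occ u w = 0) (hx : x ∈ IA w) : G.Adj u x := by
  have hxu : x ≠ u := by
    rintro rfl
    exact (occ_pos_of_mem_IA hx).ne' hu
  by_contra hadj
  have := hIA ▸ mem_IA_mul_of hx ((G.compl_adj x u).mpr ⟨hxu, fun h => hadj h.symm⟩)
  exact hxu this

end BlockDecomposition

open Classical in
theorem stmt_9_general {V : Type*} [Fintype V] [LinearOrder V] (G : SimpleGraph V) (u : V)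
    (w : CF G) (hIA : IA w = {u}) (hocc : occ u w = 1) :
    ∃! ws : List (CF G),
      ws.length =
        ((Finset.univ.filter (fun z => G.Adj u z ∧ 0 < occ z w)).sort (· ≤ ·)).length ∧
      w = ws.prod * CFmk G (FreeMonoid.of u) ∧
      (∀ p ∈ (((Finset.univ.filter (fun z => G.Adj u z ∧ 0 < occ z w)).sort (· ≤ ·)).zip ws),
        p.2 ≠ 1 → IA p.2 = {p.1}) ∧
      ∀ (i j : ℕ)
        (hi : i < ((Finset.univ.filter (fun z => G.Adj u z ∧ 0 < occ z w)).sort (· ≤ ·)).length)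
        (hj : j < ws.length), i < j →
          occ (((Finset.univ.filter (fun z => G.Adj u z ∧ 0 < occ z w)).sort (· ≤ ·)).get ⟨i, hi⟩)
            (ws.get ⟨j, hj⟩) = 0 := by
  obtain ⟨w', rfl⟩ : u ∈ IA w := hIA.symm ▸ rfl
  have hu : occ u w' = 0 := by simpa [occ_mul, occ_of_self] using hocc
  have hw' : IA w' ⊆ {x | x ∈ ((Finset.univ.filter
      (fun z => G.Adj u z ∧ 0 < occ z (w' * CFmk G (.of u)))).sort (· ≤ ·))} := fun x hx => by
    simpa [occ_mul] using
      ⟨adj_of_mem_IA_of_IA_mul_eq hIA hu hx, Or.inl (occ_pos_of_mem_IA hx)⟩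
  refine (existsUnique_congr fun ws => and_congr_right fun hlen => ?_).mp
    (existsUnique_isBlockDecomposition _ w' hw')
  rw [eq_comm, ← mul_of_left_inj (v := u)]
  exact and_congr_right' (and_congr_right'
    (List.pairwise_zip_iff_get (R := fun a b => occ a b = 0) hlen))

open Classical in
/-- The neighbourhood decomposition: if `IA(w) = {u}` and `u` occurs exactly once
in `w`, and `u₁ < ⋯ < u_d` are the neighbours of `u` occurring in `w`, then there
are unique (possibly empty) words `w₁, …, w_d` with `w = w₁ ⋯ w_d · u`, each
nonempty `w_i` has `IA(w_i) = {u_i}`, and `u_i` does not occur in `w_j` for `i < j`. -/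
theorem stmt_9 {V : Type*} [Fintype V] [LinearOrder V] (G : SimpleGraph V) (u : V)
    (w : CF G) (hw : w ≠ 1) (hIA : IA w = {u}) (hocc : occ u w = 1) :
    ∃! ws : List (CF G),
      ws.length =
        ((Finset.univ.filter (fun z => G.Adj u z ∧ 0 < occ z w)).sort (· ≤ ·)).length ∧
      w = ws.prod * CFmk G (FreeMonoid.of u) ∧
      (∀ p ∈ (((Finset.univ.filter (fun z => G.Adj u z ∧ 0 < occ z w)).sort (· ≤ ·)).zip ws),
        p.2 ≠ 1 → IA p.2 = {p.1}) ∧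
      ∀ (i j : ℕ)
        (hi : i < ((Finset.univ.filter (fun z => G.Adj u z ∧ 0 < occ z w)).sort (· ≤ ·)).length)
        (hj : j < ws.length), i < j →
          occ (((Finset.univ.filter (fun z => G.Adj u z ∧ 0 < occ z w)).sort (· ≤ ·)).get ⟨i, hi⟩)
            (ws.get ⟨j, hj⟩) = 0 :=
  stmt_9_general G u w hIA hocc
end
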